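/- arXiv:1101.4213 — 3 statements merged into one kernel-verified Lean document; each statement's English description precedes it below -/
import Mathlib

section
/- Let (X, r_X, μ_X) and (Y, r_Y, μ_Y) be I-marked metric measure spaces. If ∫ φ dν^{(X,r_X,μ_X)} = ∫ φ dν^{(Y,r_Y,μ_Y)} for every bounded continuous real-valued function φ on ℝ₊^{(ℕ choose 2)} × I^ℕ that depends on only finitely many coordinates, then (X, r_X, μ_X) and (Y, r_Y, μ_Y) are equivalent. -/
open MeasureTheory Topology Filter NNReal BoundedContinuousFunction

noncomputable section

/-- The index set `{(i,j) ∈ ℕ × ℕ : i < j}`, indexing the entries of a distance matrix. -/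
abbrev PairIdx : Type := {p : ℕ × ℕ // p.1 < p.2}

/-- The marked distance matrix space `ℝ₊^(ℕ choose 2) × I^ℕ`. -/
abbrev MDM (I : Type) : Type := (PairIdx → ℝ≥0) × (ℕ → I)

/-- `μinf` is the countable product `μ^⊗ℕ` of copies of `μ`: every finite-dimensional
cylinder has product measure. -/
def IsProductMeasure {α : Type} [MeasurableSpace α] (μ : Measure α)
    (μinf : Measure (ℕ → α)) : Prop :=
  IsProbabilityMeasure μinf ∧
    ∀ (n : ℕ) (A : ℕ → Set α), (∀ i, MeasurableSet (A i)) →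
      μinf {s | ∀ i < n, s i ∈ A i} = ∏ i ∈ Finset.range n, μ (A i)

/-- The marked distance matrix map `R^(X,r) : (X × I)^ℕ → ℝ₊^(ℕ choose 2) × I^ℕ`. -/
def distMatMap (X I : Type) [PseudoMetricSpace X] : (ℕ → X × I) → MDM I :=
  fun s => (fun p => nndist (s p.1.1).1 (s p.1.2).1, fun k => (s k).2)

/-- The marked distance matrix distribution of `(X, r, μ)`, given the product measure
`μinf = μ^⊗ℕ` on `(X × I)^ℕ`: the pushforward of `μinf` under the distance matrix map. -/
def mDMD {X I : Type} [PseudoMetricSpace X] [MeasurableSpace X] [MeasurableSpace I]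
    (μinf : Measure (ℕ → X × I)) : Measure (MDM I) :=
  μinf.map (distMatMap X I)

/-- The support of a measure on a metric space. -/
def metricSupport {α : Type} [PseudoMetricSpace α] [MeasurableSpace α] (μ : Measure α) :
    Set α := {x | ∀ ε > 0, 0 < μ (Metric.ball x ε)}

/-- Two marked metric measure spaces are equivalent (measure- and mark-preserving
isometric). -/
def MMMEquiv {I X Y : Type} [MetricSpace I] [MetricSpace X] [MetricSpace Y]
    [MeasurableSpace I] [MeasurableSpace X] [MeasurableSpace Y]
    (μX : Measure (X × I)) (μY : Measure (Y × I)) : Prop :=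
  ∃ φ : X → Y,
    Set.MapsTo φ (metricSupport (μX.map Prod.fst)) (metricSupport (μY.map Prod.fst)) ∧
    Measurable ((metricSupport (μX.map Prod.fst)).restrict φ) ∧
    (∀ x ∈ metricSupport (μX.map Prod.fst), ∀ x' ∈ metricSupport (μX.map Prod.fst),
      dist x x' = dist (φ x) (φ x')) ∧
    μX.map (Prod.map φ id) = μY

/-- The sum metric `r_Z + r_I` on `Z × I`. -/
def pairDist {Z I : Type} [PseudoMetricSpace Z] [PseudoMetricSpace I] (p q : Z × I) : ℝ :=
  dist p.1 q.1 + dist p.2 q.2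

/-- The Prohorov distance between two measures on `Z × I`, with respect to the
sum metric `r_Z + r_I`. -/
def prohorovDistSum {Z I : Type} [PseudoMetricSpace Z] [PseudoMetricSpace I]
    {m : MeasurableSpace (Z × I)} (μ ν : Measure (Z × I)) : ℝ :=
  sInf {ε : ℝ | 0 < ε ∧ ∀ A : Set (Z × I), MeasurableSet A →
    μ A ≤ ν {q | ∃ p ∈ A, pairDist p q < ε} + ENNReal.ofReal ε ∧
    ν A ≤ μ {q | ∃ p ∈ A, pairDist p q < ε} + ENNReal.ofReal ε}

/-- The Prohorov distance between two measures on a metric space. -/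
def prohorovDist {α : Type} [PseudoMetricSpace α] {m : MeasurableSpace α}
    (μ ν : Measure α) : ℝ :=
  sInf {ε : ℝ | 0 < ε ∧ ∀ A : Set α, MeasurableSet A →
    μ A ≤ ν {q | ∃ p ∈ A, dist p q < ε} + ENNReal.ofReal ε ∧
    ν A ≤ μ {q | ∃ p ∈ A, dist p q < ε} + ENNReal.ofReal ε}

/-- The marked Gromov-Prohorov distance between two marked metric measure spaces. -/
def mGPDist {I X₁ X₂ : Type} [MetricSpace I] [MetricSpace X₁] [MetricSpace X₂]
    [MeasurableSpace I] [MeasurableSpace X₁] [MeasurableSpace X₂]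
    (μ₁ : Measure (X₁ × I)) (μ₂ : Measure (X₂ × I)) : ℝ :=
  sInf {d : ℝ | ∃ (Z : Type) (_ : MetricSpace Z) (_ : MeasurableSpace Z),
    BorelSpace Z ∧ TopologicalSpace.SeparableSpace Z ∧ CompleteSpace Z ∧
    ∃ (φ₁ : X₁ → Z) (φ₂ : X₂ → Z), Isometry φ₁ ∧ Isometry φ₂ ∧
      d = prohorovDistSum (μ₁.map (Prod.map φ₁ id)) (μ₂.map (Prod.map φ₂ id))}

/-- The (unmarked) Gromov-Prohorov distance between two metric measure spaces. -/
def uGPDist {X₁ X₂ : Type} [MetricSpace X₁] [MetricSpace X₂]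
    [MeasurableSpace X₁] [MeasurableSpace X₂]
    (ν₁ : Measure X₁) (ν₂ : Measure X₂) : ℝ :=
  sInf {d : ℝ | ∃ (Z : Type) (_ : MetricSpace Z) (_ : MeasurableSpace Z),
    BorelSpace Z ∧ TopologicalSpace.SeparableSpace Z ∧ CompleteSpace Z ∧
    ∃ (φ₁ : X₁ → Z) (φ₂ : X₂ → Z), Isometry φ₁ ∧ Isometry φ₂ ∧
      d = prohorovDist (ν₁.map φ₁) (ν₂.map φ₂)}

/-- Weak convergence of a sequence of (Borel) measures. -/
def WeakConvSeq {Ω : Type} [TopologicalSpace Ω] [MeasurableSpace Ω]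
    (μs : ℕ → Measure Ω) (μ : Measure Ω) : Prop :=
  ∀ f : Ω →ᵇ ℝ, Tendsto (fun n => ∫ x, f x ∂(μs n)) atTop (𝓝 (∫ x, f x ∂μ))

/-- A function on the marked distance matrix space depends only on the distance
entries `r_{kl}` with `k < l ≤ n` and the first `n` mark coordinates. -/
def DependsOnFirst {I : Type} (n : ℕ) (φ : MDM I → ℝ) : Prop :=
  ∀ a b : MDM I, (∀ p : PairIdx, p.1.2 < n → a.1 p = b.1 p) →
    (∀ k < n, a.2 k = b.2 k) → φ a = φ b

/-- The shift `ρ₁ⁿ` on the marked distance matrix space. -/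
def shiftBy {I : Type} (n : ℕ) : MDM I → MDM I :=
  fun x => (fun p => x.1 ⟨(p.1.1 + n, p.1.2 + n), Nat.add_lt_add_right p.2 n⟩,
    fun k => x.2 (k + n))

/-- The (unmarked) distance matrix distribution of an mm-space `(X, r, ν)`, given the
product measure `νinf = ν^⊗ℕ` on `X^ℕ`. -/
def uDMD {X : Type} [PseudoMetricSpace X] [MeasurableSpace X] (νinf : Measure (ℕ → X)) :
    Measure (PairIdx → ℝ≥0) :=
  νinf.map (fun s => fun p : PairIdx => nndist (s p.1.1) (s p.1.2))

/-!
The two marked distance matrix distributions coincide, because the bounded continuous functions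
of finitely many coordinates form a point-separating subalgebra on a Polish space. Almost every
i.i.d. sample from `μX` lies in the support of the `X`-marginal and has empirical measures
converging weakly to `μX` (strong law of large numbers along a countable family of test
functions that determines weak convergence to `μX`). Disintegrating along the distance matrix
map produces such typical samples `s` of `μX` and `t` of `μY` with the same marked distance
matrix. Then `(s k).1 ↦ (t k).1` is an isometry from a dense subset of the support of the
`X`-marginal; by completeness of `Y` it extends to the support, and it carries the empirical
measures of `s` to those of `t`, hence `μX` to `μY`.
-/

open scoped ENNReal
open Finset (range)
open Set

theorem Filter.exists_countable_biInf_le_of_iInf_le {α ι : Type*} {f : Filter α}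
    [f.IsCountablyGenerated] {g : ι → Filter α} (hf : ⨅ i, g i ≤ f) :
    ∃ J : Set ι, J.Countable ∧ ⨅ i ∈ J, g i ≤ f := by
  obtain ⟨s, hs⟩ := f.exists_antitone_basis
  have hfin : ∀ n, ∃ t : Finset ι, s n ∈ ⨅ i ∈ t, g i := fun n => by
    have := hf (hs.mem n)
    rw [iInf_eq_iInf_finset, mem_iInf_of_directed
      (directed_of_isDirected_le fun _ _ h => biInf_mono h)] at this
    exact this
  choose t ht using hfin
  refine ⟨⋃ n, (t n : Set ι), Set.countable_iUnion fun n => (t n).countable_toSet, ?_⟩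
  refine hs.ge_iff.2 fun n _ => ?_
  have hJt : ⨅ i ∈ ⋃ m, (t m : Set ι), g i ≤ ⨅ i ∈ t n, g i :=
    biInf_mono fun i hi => Set.mem_iUnion.2 ⟨n, hi⟩
  exact hJt (ht n)

namespace MeasureTheory.ProbabilityMeasure

variable {Ω : Type*} [MeasurableSpace Ω] [TopologicalSpace Ω] [OpensMeasurableSpace Ω]

theorem nhds_eq_iInf_comap_integral (μ : ProbabilityMeasure Ω) :
    𝓝 μ = ⨅ f : Ω →ᵇ ℝ, comap (fun ν : ProbabilityMeasure Ω => ∫ ω, f ω ∂(ν : Measure Ω))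
      (𝓝 (∫ ω, f ω ∂(μ : Measure Ω))) := by
  refine le_antisymm ?_ ?_
  · exact le_iInf fun f => tendsto_iff_comap.1
      (tendsto_iff_forall_integral_tendsto.1 (tendsto_id (x := 𝓝 μ)) f)
  · exact tendsto_iff_forall_integral_tendsto.2 fun f =>
      tendsto_iff_comap.2 (iInf_le _ f)

theorem exists_countable_forall_integral_tendsto [FirstCountableTopology (ProbabilityMeasure Ω)]
    (μ : ProbabilityMeasure Ω) :
    ∃ J : Set (Ω →ᵇ ℝ), J.Countable ∧ ∀ μs : ℕ → ProbabilityMeasure Ω,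
      (∀ f ∈ J, Tendsto (fun n => ∫ ω, f ω ∂(μs n : Measure Ω)) atTop
        (𝓝 (∫ ω, f ω ∂(μ : Measure Ω)))) → Tendsto μs atTop (𝓝 μ) := by
  obtain ⟨J, hJ, hle⟩ := exists_countable_biInf_le_of_iInf_le
    (nhds_eq_iInf_comap_integral μ).ge
  refine ⟨J, hJ, fun μs hμs => (tendsto_iInf.2 fun f => tendsto_iInf.2 fun hf =>
    tendsto_comap_iff.2 (hμs f hf)).mono_right hle⟩

end MeasureTheory.ProbabilityMeasure

section empirical

variable {α : Type*} [MeasurableSpace α]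

/-- The empirical measure of the first `n + 1` points `s 0, …, s n` (the shift avoids the
empty average). -/
def empiricalMeasure (s : ℕ → α) (n : ℕ) : ProbabilityMeasure α :=
  ⟨((n + 1 : ℕ) : ℝ≥0∞)⁻¹ • ∑ i ∈ range (n + 1), Measure.dirac (s i), by
    constructor
    simp [ENNReal.inv_mul_cancel]⟩

theorem empiricalMeasure_apply_eq_zero {s : ℕ → α} {G : Set α} (hG : MeasurableSet G)
    (hs : ∀ i, s i ∉ G) (n : ℕ) : (empiricalMeasure s n : Measure α) G = 0 := by
  simp [empiricalMeasure, Measure.dirac_apply' _ hG, hs]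

variable [TopologicalSpace α] [OpensMeasurableSpace α]

theorem integral_empiricalMeasure (s : ℕ → α) (n : ℕ) (f : α →ᵇ ℝ) :
    ∫ a, f a ∂(empiricalMeasure s n : Measure α) =
      (∑ i ∈ range (n + 1), f (s i)) / (n + 1 : ℕ) := by
  simp [empiricalMeasure, integral_smul_measure, div_eq_inv_mul,
    integral_finsetSum_measure fun i _ => f.integrable (Measure.dirac (s i)),
    integral_dirac' _ _ f.continuous.measurable.stronglyMeasurable, ENNReal.toReal_add]

variable {μ : ProbabilityMeasure α} {s : ℕ → α}

theorem map_eq_of_tendsto_empiricalMeasure [NormalSpace α] {β : Type*} [TopologicalSpace β]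
    [MeasurableSpace β] [BorelSpace β] [HasOuterApproxClosed β] {ν : ProbabilityMeasure β}
    {Φ : α → β} {K : Set α} (hK : IsClosed K) (hΦ : ContinuousOn Φ K)
    (hμK : (μ : Measure α) Kᶜ = 0) (hsK : ∀ i, s i ∈ K)
    (hs : Tendsto (empiricalMeasure s) atTop (𝓝 μ))
    (hΦs : Tendsto (empiricalMeasure (Φ ∘ s)) atTop (𝓝 ν)) :
    (μ : Measure α).map Φ = ν := by
  have hKae : ∀ᵐ a ∂(μ : Measure α), a ∈ K := mem_ae_iff.2 hμK
  have hΦm : AEMeasurable Φ μ := by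
    rw [← Measure.restrict_eq_self_of_ae_mem hKae]
    exact hΦ.aemeasurable hK.measurableSet
  refine ext_of_forall_integral_eq_of_IsFiniteMeasure fun f => ?_
  -- Tietze: `f ∘ Φ` is only continuous on `K`, so replace it by a global extension `F`.
  obtain ⟨F, -, hF⟩ := BoundedContinuousFunction.exists_norm_eq_domRestrict_eq_of_closed
    (f.compContinuous ⟨K.domRestrict Φ, hΦ.domRestrict⟩) hK
  have hFK : ∀ a ∈ K, F a = f (Φ a) := fun a ha => DFunLike.congr_fun hF ⟨a, ha⟩
  have hFs : ∀ n, ∫ a, F a ∂(empiricalMeasure s n : Measure α) =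
      ∫ b, f b ∂(empiricalMeasure (Φ ∘ s) n : Measure β) := fun n => by
    simp only [integral_empiricalMeasure, Function.comp_apply, hFK _ (hsK _)]
  calc ∫ b, f b ∂(μ : Measure α).map Φ = ∫ a, f (Φ a) ∂μ :=
        integral_map hΦm f.continuous.aestronglyMeasurable
    _ = ∫ a, F a ∂μ := integral_congr_ae (hKae.mono fun a ha => (hFK a ha).symm)
    _ = ∫ b, f b ∂ν := by
      refine tendsto_nhds_unique (ProbabilityMeasure.tendsto_iff_forall_integral_tendsto.1 hs F) ?_
      simpa only [hFs] using ProbabilityMeasure.tendsto_iff_forall_integral_tendsto.1 hΦs f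

variable [HasOuterApproxClosed α]

theorem exists_mem_of_tendsto_empiricalMeasure (hs : Tendsto (empiricalMeasure s) atTop (𝓝 μ))
    {G : Set α} (hG : IsOpen G) (hμG : (μ : Measure α) G ≠ 0) : ∃ i, s i ∈ G := by
  by_contra! hsG
  refine hμG (le_antisymm ?_ bot_le)
  simpa [empiricalMeasure_apply_eq_zero hG.measurableSet hsG] using
    ProbabilityMeasure.le_liminf_measure_open_of_tendsto hs hG

theorem support_map_subset_closure_range_of_tendsto_empiricalMeasure {β : Type*}
    [TopologicalSpace β] [MeasurableSpace β] [BorelSpace β]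
    (hs : Tendsto (empiricalMeasure s) atTop (𝓝 μ)) {π : α → β} (hπ : Continuous π) :
    ((μ : Measure α).map π).support ⊆ closure (range (π ∘ s)) := by
  intro b hb
  refine mem_closure_iff.2 fun U hU hbU => ?_
  have hpos := (Measure.mem_support_iff_forall b).1 hb U (hU.mem_nhds hbU)
  rw [Measure.map_apply hπ.measurable hU.measurableSet] at hpos
  obtain ⟨i, hi⟩ := exists_mem_of_tendsto_empiricalMeasure hs (hU.preimage hπ) hpos.ne'
  exact ⟨π (s i), hi, i, rfl⟩

end empirical

namespace IsProductMeasure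

variable {α : Type} [MeasurableSpace α] {μ : Measure α} {μinf : Measure (ℕ → α)}

theorem map_eval [IsProbabilityMeasure μ] (hμ : IsProductMeasure μ μinf) (k : ℕ) :
    μinf.map (fun s => s k) = μ := by
  ext A hA
  classical
  rw [Measure.map_apply (measurable_pi_apply k) hA]
  have hcyl := hμ.2 (k + 1) (fun i => if i = k then A else Set.univ)
    (fun i => by split_ifs <;> simp [hA])
  have hset : {s : ℕ → α | ∀ i < k + 1, s i ∈ if i = k then A else Set.univ}
      = (fun s => s k) ⁻¹' A := by
    ext s
    refine ⟨fun hs => by simpa using hs k k.lt_succ_self, fun hs i _ => ?_⟩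
    split_ifs with h
    · exact h ▸ hs
    · trivial
  rw [hset] at hcyl
  rw [hcyl, Finset.prod_eq_single k (fun i _ hi => by simp [hi]) (by simp)]
  simp

theorem iIndepFun_eval [IsProbabilityMeasure μ] (hμ : IsProductMeasure μ μinf) :
    ProbabilityTheory.iIndepFun (fun k (s : ℕ → α) => s k) μinf := by
  classical
  rw [ProbabilityTheory.iIndepFun_iff_measure_inter_preimage_eq_mul]
  intro S A hA
  obtain ⟨n, hn⟩ : ∃ n, ∀ i ∈ S, i < n := ⟨S.sup id + 1, fun i hi =>
    Nat.lt_succ_of_le (Finset.le_sup (f := id) hi)⟩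
  set B : ℕ → Set α := fun i => if i ∈ S then A i else Set.univ
  have hcyl := hμ.2 n B (fun i => by dsimp only [B]; split_ifs with h <;> simp [hA, h])
  have hset : {s : ℕ → α | ∀ i < n, s i ∈ B i} = ⋂ i ∈ S, (fun s => s i) ⁻¹' A i := by
    ext s
    simp only [Set.mem_ofPred_eq, Set.mem_iInter, Set.mem_preimage, B]
    refine ⟨fun hs i hi => by simpa [hi] using hs i (hn i hi), fun hs i _ => ?_⟩
    split_ifs with h
    · exact hs i h
    · trivial
  rw [hset, ← Finset.prod_subset (fun i hi => Finset.mem_range.2 (hn i hi))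
    (fun i _ hi => by simp [B, hi])] at hcyl
  rw [hcyl]
  refine Finset.prod_congr rfl fun i hi => ?_
  simp only [B, hi, if_true]
  rw [← map_eval hμ i, Measure.map_apply (measurable_pi_apply i) (hA i hi)]

theorem ae_forall_of_ae [IsProbabilityMeasure μ] (hμ : IsProductMeasure μ μinf) {p : α → Prop}
    (h : ∀ᵐ a ∂μ, p a) : ∀ᵐ s ∂μinf, ∀ i, p (s i) :=
  ae_all_iff.2 fun i =>
    ae_of_ae_map (measurable_pi_apply i).aemeasurable ((map_eval hμ i).symm ▸ h)

theorem ae_tendsto_average [IsProbabilityMeasure μ] (hμ : IsProductMeasure μ μinf) {f : α → ℝ}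
    (hf : Measurable f) (hfi : Integrable f μ) :
    ∀ᵐ s ∂μinf, Tendsto (fun n : ℕ => (∑ i ∈ range n, f (s i)) / n) atTop (𝓝 (∫ a, f a ∂μ)) := by
  have hmap : ∀ i, μinf.map (fun s => s i) = μ := map_eval hμ
  have hint : Integrable (fun s : ℕ → α => f (s 0)) μinf := by
    rw [← hmap 0] at hfi
    exact hfi.comp_measurable (measurable_pi_apply 0)
  have hindep : Pairwise fun i j => ProbabilityTheory.IndepFun (fun s : ℕ → α => f (s i))
      (fun s => f (s j)) μinf :=
    fun i j hij => ((iIndepFun_eval hμ).indepFun hij).comp hf hf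
  have hident : ∀ i, ProbabilityTheory.IdentDistrib (fun s : ℕ → α => f (s i))
      (fun s => f (s 0)) μinf μinf := fun i =>
    (ProbabilityTheory.IdentDistrib.mk (measurable_pi_apply i).aemeasurable
      (measurable_pi_apply 0).aemeasurable (by rw [hmap, hmap])).comp hf
  have hmean : ∫ s, f (s 0) ∂μinf = ∫ a, f a ∂μ := by
    rw [← hmap 0, integral_map (measurable_pi_apply 0).aemeasurable
      hf.aestronglyMeasurable]
  simpa only [hmean] using ProbabilityTheory.strong_law_ae_real _ hint hindep hident

theorem ae_tendsto_empiricalMeasure [TopologicalSpace α]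
    [TopologicalSpace.PseudoMetrizableSpace α] [TopologicalSpace.SeparableSpace α]
    [OpensMeasurableSpace α] [IsProbabilityMeasure μ] (hμ : IsProductMeasure μ μinf) :
    ∀ᵐ s ∂μinf, Tendsto (empiricalMeasure s) atTop (𝓝 ⟨μ, ‹_›⟩) := by
  obtain ⟨J, hJ, hconv⟩ := ProbabilityMeasure.exists_countable_forall_integral_tendsto ⟨μ, ‹_›⟩
  have hJs : ∀ᵐ s ∂μinf, ∀ f ∈ J, Tendsto (fun n : ℕ => (∑ i ∈ range n, f (s i)) / n) atTop
      (𝓝 (∫ a, f a ∂μ)) :=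
    (ae_ball_iff hJ).2 fun f _ => ae_tendsto_average hμ f.continuous.measurable (f.integrable μ)
  filter_upwards [hJs] with s hs
  refine hconv _ fun f hf => ?_
  simp only [integral_empiricalMeasure]
  exact (tendsto_add_atTop_iff_nat 1).2 (hs f hf)

end IsProductMeasure

theorem ae_map_exists_of_ae {β E : Type*} [MeasurableSpace β] [StandardBorelSpace β]
    [Nonempty β] [MeasurableSpace E] [MeasurableEq E] {P : Measure β} [IsProbabilityMeasure P]
    {g : β → E} (hg : Measurable g) {p : β → Prop} (hp : ∀ᵐ b ∂P, p b) :
    ∀ᵐ e ∂(P.map g), ∃ b, p b ∧ g b = e := by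
  obtain ⟨T, hTae, hTm, hTp⟩ := hp.exists_measurable_mem
  have hgraph : Measurable fun b => (g b, b) := hg.prodMk measurable_id
  set ρ : Measure (E × β) := P.map fun b => (g b, b)
  have hρ : ρ.fst = P.map g := by
    rw [Measure.fst, Measure.map_map measurable_fst hgraph]
    rfl
  have hS : ∀ᵐ q ∂ρ, q.2 ∈ T ∧ g q.2 = q.1 := by
    refine (ae_map_iff hgraph.aemeasurable ?_).2 ?_
    · exact (measurable_snd hTm).inter (measurableSet_eq_fun (hg.comp measurable_snd)
        measurable_fst)
    · filter_upwards [hTae] with b hb using ⟨hb, rfl⟩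
  -- The conditional law of `b` given `g b = e` is carried by `T ∩ g ⁻¹' {e}`.
  rw [← ρ.disintegrate ρ.condKernel] at hS
  filter_upwards [hρ ▸ Measure.ae_ae_of_ae_compProd hS] with e he
  obtain ⟨b, hbT, hbe⟩ := he.exists
  exact ⟨b, hTp b hbT, hbe⟩

theorem metricSupport_eq_support {α : Type} [PseudoMetricSpace α] [MeasurableSpace α]
    (μ : Measure α) : metricSupport μ = μ.support :=
  Set.ext fun _ => Metric.nhds_basis_ball.mem_measureSupport.symm

theorem exists_map_dist_eq_of_dist_eq {ι X Y : Type*} [PseudoMetricSpace X] [MetricSpace Y]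
    [CompleteSpace Y] [Nonempty Y] {x : ι → X} {y : ι → Y}
    (h : ∀ k l, dist (x k) (x l) = dist (y k) (y l)) :
    ∃ φ : X → Y, (∀ a ∈ closure (range x), ∀ b ∈ closure (range x), dist (φ a) (φ b) = dist a b) ∧
      (∀ k, φ (x k) = y k) ∧ MapsTo φ (closure (range x)) (closure (range y)) := by
  set G := closure (range fun k => (x k, y k))
  have hG : ∀ p ∈ G, ∀ q ∈ G, dist p.1 q.1 = dist p.2 q.2 := by
    have : G ×ˢ G ⊆ {pq : (X × Y) × (X × Y) | dist pq.1.1 pq.2.1 = dist pq.1.2 pq.2.2} := by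
      rw [← closure_prod_eq]
      refine closure_minimal ?_ (isClosed_eq (by fun_prop) (by fun_prop))
      rintro ⟨_, _⟩ ⟨⟨k, rfl⟩, ⟨l, rfl⟩⟩
      exact h k l
    exact fun p hp q hq => this (mk_mem_prod hp hq)
  have hfill : ∀ a ∈ closure (range x), ∃ b, (a, b) ∈ G := by
    intro a ha
    obtain ⟨u, hu, hlim⟩ := mem_closure_iff_seq_limit.1 ha
    choose k hk using hu
    have hxk : Tendsto (fun n => x (k n)) atTop (𝓝 a) := by simpa only [hk] using hlim
    have hyk : CauchySeq fun n => y (k n) := by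
      refine Metric.cauchySeq_iff.2 fun ε hε => ?_
      obtain ⟨N, hN⟩ := Metric.cauchySeq_iff.1 hxk.cauchySeq ε hε
      exact ⟨N, fun m hm n hn => h (k m) (k n) ▸ hN m hm n hn⟩
    obtain ⟨b, hb⟩ := cauchySeq_tendsto_of_complete hyk
    exact ⟨b, mem_closure_of_tendsto (hxk.prodMk_nhds hb)
      (Eventually.of_forall fun n => ⟨k n, rfl⟩)⟩
  choose! φ hφ using hfill
  have hxG : ∀ k, (x k, y k) ∈ G := fun k => subset_closure ⟨k, rfl⟩
  have hxD : ∀ k, x k ∈ closure (range x) := fun k => subset_closure ⟨k, rfl⟩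
  refine ⟨φ, fun a ha b hb => (hG _ (hφ a ha) _ (hφ b hb)).symm, fun k => ?_, fun a ha => ?_⟩
  · exact dist_eq_zero.1 <| (hG _ (hφ _ (hxD k)) _ (hxG k)).symm.trans (dist_self _)
  · have hsnd : Prod.snd '' G ⊆ closure (Prod.snd '' range fun k => (x k, y k)) :=
      image_closure_subset_closure_image continuous_snd
    rw [← range_comp] at hsnd
    exact hsnd ⟨_, hφ a ha, rfl⟩

theorem DependsOnFirst.mono {I : Type} {n m : ℕ} {φ : MDM I → ℝ} (hφ : DependsOnFirst n φ)
    (hnm : n ≤ m) : DependsOnFirst m φ :=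
  fun a b h₁ h₂ => hφ a b (fun p hp => h₁ p (hp.trans_le hnm)) (fun k hk => h₂ k (hk.trans_le hnm))

section finiteDependence

variable (I : Type) [TopologicalSpace I]

def finiteDependenceSubalgebra : StarSubalgebra ℝ (MDM I →ᵇ ℝ) where
  carrier := {φ | ∃ n, DependsOnFirst n ⇑φ}
  mul_mem' := by
    rintro φ ψ ⟨n, hφ⟩ ⟨m, hψ⟩
    refine ⟨max n m, fun a b h₁ h₂ => ?_⟩
    simp only [BoundedContinuousFunction.coe_mul, Pi.mul_apply,
      (hφ.mono (le_max_left n m)) a b h₁ h₂, (hψ.mono (le_max_right n m)) a b h₁ h₂]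
  add_mem' := by
    rintro φ ψ ⟨n, hφ⟩ ⟨m, hψ⟩
    refine ⟨max n m, fun a b h₁ h₂ => ?_⟩
    simp only [BoundedContinuousFunction.coe_add, Pi.add_apply,
      (hφ.mono (le_max_left n m)) a b h₁ h₂, (hψ.mono (le_max_right n m)) a b h₁ h₂]
  algebraMap_mem' _ := ⟨0, fun _ _ _ _ => rfl⟩
  star_mem' := id

variable {I}

theorem exists_mem_finiteDependenceSubalgebra_apply_ne {Z : Type} [TopologicalSpace Z]
    [T1Space Z] [NormalSpace Z] {π : MDM I → Z} (hπ : Continuous π) (n : ℕ)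
    (hπn : ∀ a b : MDM I, (∀ p : PairIdx, p.1.2 < n → a.1 p = b.1 p) →
      (∀ k < n, a.2 k = b.2 k) → π a = π b)
    {a b : MDM I} (hab : π a ≠ π b) : ∃ φ ∈ finiteDependenceSubalgebra I, φ a ≠ φ b := by
  obtain ⟨g, hga, hgb, -⟩ := exists_bounded_zero_one_of_closed
    isClosed_singleton isClosed_singleton (Set.disjoint_singleton.2 hab)
  refine ⟨g.compContinuous ⟨π, hπ⟩, ⟨n, fun a' b' h₁ h₂ => ?_⟩, ?_⟩
  · simp [hπn a' b' h₁ h₂]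
  · simp [hga rfl, hgb rfl]

theorem separatesPoints_finiteDependenceSubalgebra [T1Space I] [NormalSpace I] :
    ((finiteDependenceSubalgebra I).map
      (BoundedContinuousFunction.toContinuousMapStarₐ ℝ)).SeparatesPoints := by
  intro a b hab
  suffices ∃ φ ∈ finiteDependenceSubalgebra I, φ a ≠ φ b by
    obtain ⟨φ, hφ, hne⟩ := this
    exact ⟨φ, ⟨φ.toContinuousMap, ⟨φ, hφ, rfl⟩, rfl⟩, hne⟩
  rcases Prod.ext_iff.not.1 hab |> not_and_or.1 with hdist | hmark
  · obtain ⟨p, hp⟩ := Function.ne_iff.1 hdist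
    exact exists_mem_finiteDependenceSubalgebra_apply_ne (π := fun x => x.1 p) (by fun_prop)
      (p.1.2 + 1) (fun a b h₁ _ => h₁ p p.1.2.lt_succ_self) hp
  · obtain ⟨k, hk⟩ := Function.ne_iff.1 hmark
    exact exists_mem_finiteDependenceSubalgebra_apply_ne (π := fun x => x.2 k) (by fun_prop)
      (k + 1) (fun a b _ h₂ => h₂ k k.lt_succ_self) hk

end finiteDependence

theorem MDM.ext_of_forall_integral_eq {I : Type} [MetricSpace I] [CompleteSpace I]
    [TopologicalSpace.SeparableSpace I] [MeasurableSpace I] [BorelSpace I]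
    {ν₁ ν₂ : Measure (MDM I)} [IsFiniteMeasure ν₁] [IsFiniteMeasure ν₂]
    (h : ∀ (φ : MDM I →ᵇ ℝ) (n : ℕ), DependsOnFirst n ⇑φ → ∫ x, φ x ∂ν₁ = ∫ x, φ x ∂ν₂) :
    ν₁ = ν₂ :=
  ext_of_forall_mem_subalgebra_integral_eq_of_polish separatesPoints_finiteDependenceSubalgebra
    fun _ ⟨n, hφ⟩ => h _ n hφ

theorem continuous_distMatMap (X I : Type) [PseudoMetricSpace X] [TopologicalSpace I] :
    Continuous (distMatMap X I) := by
  unfold distMatMap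
  fun_prop

theorem dist_eq_of_distMatMap_eq {X Y I : Type} [PseudoMetricSpace X] [PseudoMetricSpace Y]
    {s : ℕ → X × I} {t : ℕ → Y × I} (h : distMatMap X I s = distMatMap Y I t) (k l : ℕ) :
    dist (s k).1 (s l).1 = dist (t k).1 (t l).1 := by
  have hlt : ∀ k l, k < l → dist (s k).1 (s l).1 = dist (t k).1 (t l).1 := fun k l hkl => by
    have := congrFun (congrArg Prod.fst h) ⟨(k, l), hkl⟩
    simp only [distMatMap] at this
    rw [dist_nndist, dist_nndist, this]
  rcases lt_trichotomy k l with hkl | rfl | hkl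
  · exact hlt k l hkl
  · simp
  · rw [dist_comm, hlt l k hkl, dist_comm]

section reconstruction

variable {I X Y : Type} [MetricSpace I] [TopologicalSpace.SeparableSpace I] [MeasurableSpace I]
  [BorelSpace I] [MetricSpace X] [TopologicalSpace.SeparableSpace X] [MeasurableSpace X]
  [BorelSpace X] [MetricSpace Y] [CompleteSpace Y] [MeasurableSpace Y] [BorelSpace Y]

theorem mmmEquiv_of_distMatMap_eq {μX : Measure (X × I)} {μY : Measure (Y × I)}
    [IsProbabilityMeasure μX] [IsProbabilityMeasure μY] {s : ℕ → X × I} {t : ℕ → Y × I}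
    (hs : Tendsto (empiricalMeasure s) atTop (𝓝 ⟨μX, ‹_›⟩))
    (ht : Tendsto (empiricalMeasure t) atTop (𝓝 ⟨μY, ‹_›⟩))
    (hsX : ∀ i, (s i).1 ∈ (μX.map Prod.fst).support)
    (htY : ∀ i, (t i).1 ∈ (μY.map Prod.fst).support)
    (hst : distMatMap X I s = distMatMap Y I t) : MMMEquiv μX μY := by
  set SX := (μX.map Prod.fst).support
  have hSX : closure (range fun i => (s i).1) = SX :=
    (closure_minimal (range_subset_iff.2 hsX) Measure.isClosed_support).antisymm
      (support_map_subset_closure_range_of_tendsto_empiricalMeasure hs continuous_fst)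
  have hSY : closure (range fun i => (t i).1) = (μY.map Prod.fst).support :=
    (closure_minimal (range_subset_iff.2 htY) Measure.isClosed_support).antisymm
      (support_map_subset_closure_range_of_tendsto_empiricalMeasure ht continuous_fst)
  have : Nonempty Y := ⟨(t 0).1⟩
  obtain ⟨φ, hφ, hφst, hmaps⟩ := exists_map_dist_eq_of_dist_eq (dist_eq_of_distMatMap_eq hst)
  rw [hSX] at hφ hmaps
  rw [hSY] at hmaps
  have hφc : Continuous (SX.domRestrict φ) :=
    (Isometry.of_dist_eq (f := SX.domRestrict φ) fun a b => hφ a a.2 b b.2).continuous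
  unfold MMMEquiv
  rw [metricSupport_eq_support, metricSupport_eq_support]
  refine ⟨φ, hmaps, hφc.measurable, fun a ha b hb => (hφ a ha b hb).symm, ?_⟩
  have hΦt : Prod.map φ id ∘ s = t :=
    funext fun i => Prod.ext (hφst i) (congrFun (congrArg Prod.snd hst) i)
  have hSXc : μX (SX ×ˢ univ)ᶜ = 0 := by
    rw [prod_univ, ← preimage_compl,
      ← Measure.map_apply measurable_fst Measure.isClosed_support.measurableSet.compl]
    exact Measure.measure_compl_support
  exact map_eq_of_tendsto_empiricalMeasure (μ := ⟨μX, ‹_›⟩) (ν := ⟨μY, ‹_›⟩)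
    (Measure.isClosed_support.prod isClosed_univ)
    ((continuousOn_iff_continuous_domRestrict.2 hφc).prodMap continuousOn_id) hSXc
    (fun i => ⟨hsX i, trivial⟩) hs (hΦt ▸ ht)

end reconstruction

/-- if the integrals of all bounded continuous functions depending on
finitely many coordinates agree for the two marked distance matrix distributions, then
the two marked metric measure spaces are equivalent. -/
theorem equiv_of_forall_integral_eq
    {I : Type} [MetricSpace I] [CompleteSpace I] [TopologicalSpace.SeparableSpace I]
    [MeasurableSpace I] [BorelSpace I]
    {X : Type} [MetricSpace X] [CompleteSpace X] [TopologicalSpace.SeparableSpace X]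
    [MeasurableSpace X] [BorelSpace X]
    {Y : Type} [MetricSpace Y] [CompleteSpace Y] [TopologicalSpace.SeparableSpace Y]
    [MeasurableSpace Y] [BorelSpace Y]
    (μX : Measure (X × I)) [IsProbabilityMeasure μX]
    (μY : Measure (Y × I)) [IsProbabilityMeasure μY]
    (μXinf : Measure (ℕ → X × I)) (hX : IsProductMeasure μX μXinf)
    (μYinf : Measure (ℕ → Y × I)) (hY : IsProductMeasure μY μYinf)
    (h : ∀ (φ : MDM I →ᵇ ℝ) (n : ℕ), DependsOnFirst n ⇑φ →
      ∫ x, φ x ∂(mDMD (I := I) μXinf) = ∫ x, φ x ∂(mDMD (I := I) μYinf)) :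
    MMMEquiv μX μY := by
  have := hX.1
  have := hY.1
  have := nonempty_of_isProbabilityMeasure μX
  have := nonempty_of_isProbabilityMeasure μY
  have hXgood := ae_map_exists_of_ae (continuous_distMatMap X I).measurable
    (hX.ae_tendsto_empiricalMeasure.and (hX.ae_forall_of_ae
      (ae_of_ae_map measurable_fst.aemeasurable (μX.map Prod.fst).support_mem_ae)))
  have hYgood := ae_map_exists_of_ae (continuous_distMatMap Y I).measurable
    (hY.ae_tendsto_empiricalMeasure.and (hY.ae_forall_of_ae
      (ae_of_ae_map measurable_fst.aemeasurable (μY.map Prod.fst).support_mem_ae)))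
  have : IsProbabilityMeasure (mDMD (I := I) μXinf) :=
    Measure.isProbabilityMeasure_map (continuous_distMatMap X I).aemeasurable
  have : IsProbabilityMeasure (mDMD (I := I) μYinf) :=
    Measure.isProbabilityMeasure_map (continuous_distMatMap Y I).aemeasurable
  have hν : mDMD (I := I) μXinf = mDMD μYinf := MDM.ext_of_forall_integral_eq h
  rw [← mDMD, hν] at hXgood
  obtain ⟨_, ⟨s, ⟨hs, hsX⟩, rfl⟩, ⟨t, ⟨ht, htY⟩, hts⟩⟩ := (hXgood.and hYgood).exists
  exact mmmEquiv_of_distMatMap_eq hs ht hsX htY hts.symm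

end
end

section
/- For I-marked metric measure spaces (X₁, r₁, μ₁) and (X₂, r₂, μ₂), the marked Gromov-Prohorov distance d_MGP((X₁,r₁,μ₁),(X₂,r₂,μ₂)) equals the infimum, over all metrics r on the disjoint union X₁ ⊔ X₂ extending the metrics r₁ on X₁ and r₂ on X₂, of the Prohorov distance between (φ̃₁)_*μ₁ and (φ̃₂)_*μ₂, where φ₁ : X₁ → X₁ ⊔ X₂ and φ₂ : X₂ → X₁ ⊔ X₂ are the canonical embeddings and φ̃ᵢ(x, u) = (φᵢ(x), u). -/
open MeasureTheory Topology Filter NNReal BoundedContinuousFunction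

noncomputable section

/-!
Any metric on `X₁ ⊕ X₂` extending those of `X₁` and `X₂` makes the disjoint union a Polish
space containing both as closed isometric copies, so the right-hand infimum is taken over a
subfamily of the embeddings defining `mGPDist`. Conversely, given isometric embeddings
`φᵢ : Xᵢ → Z` and `ε > 0`, pulling back the max metric of `Z × ℝ` along `inl x ↦ (φ₁ x, 0)`,
`inr y ↦ (φ₂ y, ε)` gives an extending metric for which `Sum.elim φ₁ φ₂` decreases distances by
at most `ε`. Such a map lowers the Prohorov distance by at most `ε`: the preimage of a
`δ`-neighbourhood of the closure of the image of `A` lies in the `(δ + ε)`-neighbourhood of `A`.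
-/

section SumOfClosedEmbeddings

-- The structure on `X₁ ⊕ X₂` is an arbitrary one; it is bound implicitly so that instance search
-- does not replace it by the disjoint-union structure.
variable {X₁ X₂ : Type*}

theorem completeSpace_sum_of_isUniformInducing [UniformSpace X₁] [CompleteSpace X₁]
    [UniformSpace X₂] [CompleteSpace X₂] {_ : UniformSpace (X₁ ⊕ X₂)}
    (h₁ : IsUniformInducing (Sum.inl : X₁ → X₁ ⊕ X₂))
    (h₂ : IsUniformInducing (Sum.inr : X₂ → X₁ ⊕ X₂)) : CompleteSpace (X₁ ⊕ X₂) := by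
  rw [completeSpace_iff_isComplete_univ, ← Set.range_inl_union_range_inr]
  exact h₁.isComplete_range.union h₂.isComplete_range

theorem separableSpace_sum_of_continuous [TopologicalSpace X₁]
    [TopologicalSpace.SeparableSpace X₁] [TopologicalSpace X₂]
    [TopologicalSpace.SeparableSpace X₂] {_ : TopologicalSpace (X₁ ⊕ X₂)}
    (h₁ : Continuous (Sum.inl : X₁ → X₁ ⊕ X₂)) (h₂ : Continuous (Sum.inr : X₂ → X₁ ⊕ X₂)) :
    TopologicalSpace.SeparableSpace (X₁ ⊕ X₂) := by
  rw [← TopologicalSpace.isSeparable_univ_iff, ← Set.range_inl_union_range_inr]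
  exact (TopologicalSpace.isSeparable_range h₁).union (TopologicalSpace.isSeparable_range h₂)

theorem borelSpace_sum_of_isClosedEmbedding [TopologicalSpace X₁] [MeasurableSpace X₁]
    [BorelSpace X₁] [TopologicalSpace X₂] [MeasurableSpace X₂] [BorelSpace X₂]
    {_ : TopologicalSpace (X₁ ⊕ X₂)}
    (h₁ : IsClosedEmbedding (Sum.inl : X₁ → X₁ ⊕ X₂))
    (h₂ : IsClosedEmbedding (Sum.inr : X₂ → X₁ ⊕ X₂)) : BorelSpace (X₁ ⊕ X₂) := by
  refine ⟨le_antisymm (fun s hs => ?_) ?_⟩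
  · borelize (X₁ ⊕ X₂)
    rw [← Set.image_preimage_inl_union_image_preimage_inr s]
    exact (h₁.measurableEmbedding.measurableSet_image.2 (measurableSet_sum_iff.1 hs).1).union
      (h₂.measurableEmbedding.measurableSet_image.2 (measurableSet_sum_iff.1 hs).2)
  · exact MeasurableSpace.generateFrom_le fun t ht => measurableSet_sum_iff.2
      ⟨(ht.preimage h₁.continuous).measurableSet, (ht.preimage h₂.continuous).measurableSet⟩

end SumOfClosedEmbeddings

section ProhorovSum

variable {W Z J : Type} [PseudoMetricSpace W] [PseudoMetricSpace Z] [PseudoMetricSpace J]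

def pairThickening (A : Set (Z × J)) (ε : ℝ) : Set (Z × J) :=
  {q | ∃ p ∈ A, pairDist p q < ε}

theorem isOpen_pairThickening (A : Set (Z × J)) (ε : ℝ) : IsOpen (pairThickening A ε) := by
  have : pairThickening A ε = ⋃ p ∈ A, {q | dist p.1 q.1 + dist p.2 q.2 < ε} := by
    ext q; simp [pairThickening, pairDist]
  rw [this]
  exact isOpen_biUnion fun p _ => isOpen_lt
    ((continuous_const.dist continuous_fst).add (continuous_const.dist continuous_snd))
    continuous_const

theorem prohorovDistSum_nonneg {m : MeasurableSpace (Z × J)} (μ ν : Measure (Z × J)) :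
    0 ≤ prohorovDistSum μ ν :=
  Real.sInf_nonneg fun _ hε => hε.1.le

theorem exists_prohorovDistSum_admissible {m : MeasurableSpace (Z × J)}
    (μ ν : Measure (Z × J)) [IsFiniteMeasure μ] [IsFiniteMeasure ν] :
    ∃ ε : ℝ, 0 < ε ∧ ∀ A : Set (Z × J), MeasurableSet A →
      μ A ≤ ν (pairThickening A ε) + ENNReal.ofReal ε ∧
      ν A ≤ μ (pairThickening A ε) + ENNReal.ofReal ε := by
  set ε := (μ Set.univ).toReal + (ν Set.univ).toReal + 1
  have hle : ∀ (ρ : Measure (Z × J)) [IsFiniteMeasure ρ], (ρ Set.univ).toReal ≤ ε →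
      ∀ A, ρ A ≤ ENNReal.ofReal ε := fun ρ _ hρ A =>
    (measure_mono (Set.subset_univ A)).trans
      ((ENNReal.ofReal_toReal (measure_ne_top ρ _)).symm.le.trans (ENNReal.ofReal_le_ofReal hρ))
  refine ⟨ε, by positivity, fun A _ => ⟨?_, ?_⟩⟩
  · exact (hle μ (by linarith [(ν Set.univ).toReal_nonneg]) A).trans le_add_self
  · exact (hle ν (by linarith [(μ Set.univ).toReal_nonneg]) A).trans le_add_self

theorem preimage_pairThickening_closure_image_subset {ψ : W → Z} {ε : ℝ}
    (hψ : ∀ a b, dist a b ≤ dist (ψ a) (ψ b) + ε) (A : Set (W × J)) (δ : ℝ) :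
    Prod.map ψ id ⁻¹' pairThickening (closure (Prod.map ψ id '' A)) δ ⊆
      pairThickening A (δ + ε) := by
  rintro w ⟨p, hp, hpw⟩
  set η := δ - pairDist p (Prod.map ψ id w) with hη
  obtain ⟨_, ⟨a, ha, rfl⟩, hpa⟩ := Metric.mem_closure_iff.1 hp (η / 2) (by linarith)
  refine ⟨a, ha, ?_⟩
  have hpa₁ : dist p.1 (ψ a.1) < η / 2 := (le_max_left _ _).trans_lt hpa
  have hpa₂ : dist p.2 a.2 < η / 2 := (le_max_right _ _).trans_lt hpa
  simp only [pairDist, Prod.map_fst, Prod.map_snd, id] at hη hpa₁ hpa₂ ⊢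
  have := hψ a.1 w.1
  have := dist_triangle_left (ψ a.1) (ψ w.1) p.1
  have := dist_triangle_left a.2 w.2 p.2
  linarith

variable [MeasurableSpace W] [MeasurableSpace Z] [MeasurableSpace J]
  [OpensMeasurableSpace (Z × J)] {ψ : W → Z} {ε : ℝ}

theorem measure_le_pairThickening_of_map (hψm : Measurable ψ) (hε : 0 ≤ ε)
    (hψ : ∀ a b, dist a b ≤ dist (ψ a) (ψ b) + ε) {α β : Measure (W × J)} {δ : ℝ}
    (hαβ : ∀ B, MeasurableSet B →
      α.map (Prod.map ψ id) B ≤ β.map (Prod.map ψ id) (pairThickening B δ) + ENNReal.ofReal δ)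
    (A : Set (W × J)) :
    α A ≤ β (pairThickening A (δ + ε)) + ENNReal.ofReal (δ + ε) := by
  have hΨ : Measurable (Prod.map ψ (id : J → J)) := hψm.prodMap measurable_id
  set B := closure (Prod.map ψ id '' A)
  calc α A ≤ α.map (Prod.map ψ id) B := by
        rw [Measure.map_apply hΨ isClosed_closure.measurableSet]
        exact measure_mono ((Set.subset_preimage_image _ A).trans
          (Set.preimage_mono subset_closure))
    _ ≤ β.map (Prod.map ψ id) (pairThickening B δ) + ENNReal.ofReal δ :=
        hαβ B isClosed_closure.measurableSet
    _ ≤ β (pairThickening A (δ + ε)) + ENNReal.ofReal (δ + ε) := by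
        rw [Measure.map_apply hΨ (isOpen_pairThickening B δ).measurableSet]
        gcongr
        · exact preimage_pairThickening_closure_image_subset hψ A δ
        · linarith

theorem prohorovDistSum_le_map_add (hψm : Measurable ψ) (hε : 0 ≤ ε)
    (hψ : ∀ a b, dist a b ≤ dist (ψ a) (ψ b) + ε)
    (μ ν : Measure (W × J)) [IsFiniteMeasure μ] [IsFiniteMeasure ν] :
    prohorovDistSum μ ν ≤
      prohorovDistSum (μ.map (Prod.map ψ id)) (ν.map (Prod.map ψ id)) + ε := by
  rw [← sub_le_iff_le_add]
  obtain ⟨δ₀, hδ₀⟩ := exists_prohorovDistSum_admissible (μ.map (Prod.map ψ id))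
    (ν.map (Prod.map ψ id))
  refine le_csInf ⟨δ₀, hδ₀⟩ fun δ ⟨hδ, hδA⟩ => sub_le_iff_le_add.2 <|
    csInf_le ⟨0, fun _ h => h.1.le⟩ ⟨by positivity, fun A _ => ⟨?_, ?_⟩⟩
  · exact measure_le_pairThickening_of_map hψm hε hψ (fun B hB => (hδA B hB).1) A
  · exact measure_le_pairThickening_of_map hψm hε hψ (fun B hB => (hδA B hB).2) A

end ProhorovSum

theorem exists_sum_metric_le_dist_sumElim_add {X₁ X₂ Z : Type*} [MetricSpace X₁]
    [MetricSpace X₂] [MetricSpace Z] {φ₁ : X₁ → Z} {φ₂ : X₂ → Z} (hφ₁ : Isometry φ₁)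
    (hφ₂ : Isometry φ₂) {ε : ℝ} (hε : 0 < ε) :
    ∃ _ : MetricSpace (X₁ ⊕ X₂),
      (∀ x y : X₁, dist (Sum.inl x : X₁ ⊕ X₂) (Sum.inl y) = dist x y) ∧
      (∀ x y : X₂, dist (Sum.inr x : X₁ ⊕ X₂) (Sum.inr y) = dist x y) ∧
      ∀ a b : X₁ ⊕ X₂, dist a b ≤ dist (Sum.elim φ₁ φ₂ a) (Sum.elim φ₁ φ₂ b) + ε := by
  let F : X₁ ⊕ X₂ → Z × ℝ := Sum.elim (fun x => (φ₁ x, 0)) (fun y => (φ₂ y, ε))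
  have hF : Function.Injective F :=
    Function.Injective.sumElim (fun _ _ h => hφ₁.injective (congrArg Prod.fst h))
      (fun _ _ h => hφ₂.injective (congrArg Prod.fst h)) fun _ _ h => hε.ne (congrArg Prod.snd h)
  refine ⟨MetricSpace.induced F hF inferInstance, ?_, ?_, ?_⟩
  · intro x y
    show dist (F (.inl x)) (F (.inl y)) = dist x y
    simp [F, Prod.dist_eq, hφ₁.dist_eq]
  · intro x y
    show dist (F (.inr x)) (F (.inr y)) = dist x y
    simp [F, Prod.dist_eq, hφ₂.dist_eq]
  · intro a b
    show dist (F a) (F b) ≤ _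
    rcases a with x | x <;> rcases b with y | y <;> simp [F, Prod.dist_eq, hε.le, abs_of_pos hε]

section MarkedGromovProhorov

variable {I X₁ X₂ : Type} [MetricSpace I] [MeasurableSpace I]
  [MetricSpace X₁] [CompleteSpace X₁] [TopologicalSpace.SeparableSpace X₁]
  [MeasurableSpace X₁] [BorelSpace X₁]
  [MetricSpace X₂] [CompleteSpace X₂] [TopologicalSpace.SeparableSpace X₂]
  [MeasurableSpace X₂] [BorelSpace X₂]
  (μ₁ : Measure (X₁ × I)) (μ₂ : Measure (X₂ × I))

theorem prohorovDistSum_sum_mem_mGPDist_set [MetricSpace (X₁ ⊕ X₂)]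
    (h₁ : Isometry (Sum.inl : X₁ → X₁ ⊕ X₂)) (h₂ : Isometry (Sum.inr : X₂ → X₁ ⊕ X₂)) :
    prohorovDistSum (μ₁.map (Prod.map Sum.inl id)) (μ₂.map (Prod.map Sum.inr id)) ∈
      {d : ℝ | ∃ (Z : Type) (_ : MetricSpace Z) (_ : MeasurableSpace Z),
        BorelSpace Z ∧ TopologicalSpace.SeparableSpace Z ∧ CompleteSpace Z ∧
        ∃ (φ₁ : X₁ → Z) (φ₂ : X₂ → Z), Isometry φ₁ ∧ Isometry φ₂ ∧
          d = prohorovDistSum (μ₁.map (Prod.map φ₁ id)) (μ₂.map (Prod.map φ₂ id))} :=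
  ⟨X₁ ⊕ X₂, _, _, borelSpace_sum_of_isClosedEmbedding h₁.isClosedEmbedding h₂.isClosedEmbedding,
    separableSpace_sum_of_continuous h₁.continuous h₂.continuous,
    completeSpace_sum_of_isUniformInducing h₁.isUniformInducing h₂.isUniformInducing,
    _, _, h₁, h₂, rfl⟩

theorem mGPDist_le_of_sum_metric [MetricSpace (X₁ ⊕ X₂)]
    (h₁ : Isometry (Sum.inl : X₁ → X₁ ⊕ X₂)) (h₂ : Isometry (Sum.inr : X₂ → X₁ ⊕ X₂)) :
    mGPDist μ₁ μ₂ ≤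
      prohorovDistSum (μ₁.map (Prod.map Sum.inl id)) (μ₂.map (Prod.map Sum.inr id)) :=
  csInf_le ⟨0, fun _ ⟨_, _, _, _, _, _, _, _, _, _, hd⟩ => hd ▸ prohorovDistSum_nonneg _ _⟩
    (prohorovDistSum_sum_mem_mGPDist_set μ₁ μ₂ h₁ h₂)

theorem le_mGPDist_of_forall_le {c : ℝ}
    (h : ∀ (Z : Type) [MetricSpace Z] [MeasurableSpace Z] [BorelSpace Z]
      [TopologicalSpace.SeparableSpace Z] (φ₁ : X₁ → Z) (φ₂ : X₂ → Z),
      Isometry φ₁ → Isometry φ₂ →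
        c ≤ prohorovDistSum (μ₁.map (Prod.map φ₁ id)) (μ₂.map (Prod.map φ₂ id))) :
    c ≤ mGPDist μ₁ μ₂ := by
  let := Metric.metricSpaceSum (X := X₁) (Y := X₂)
  exact le_csInf ⟨_, prohorovDistSum_sum_mem_mGPDist_set μ₁ μ₂ Metric.isometry_inl
      Metric.isometry_inr⟩
    fun _ ⟨Z, _, _, _, _, _, φ₁, φ₂, h₁, h₂, hd⟩ => hd ▸ h Z φ₁ φ₂ h₁ h₂

end MarkedGromovProhorov

theorem mGPDist_eq_inf_disjoint_union_general
    {I : Type} [MetricSpace I]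
    [MeasurableSpace I] [BorelSpace I]
    {X₁ : Type} [MetricSpace X₁] [CompleteSpace X₁] [TopologicalSpace.SeparableSpace X₁]
    [MeasurableSpace X₁] [BorelSpace X₁]
    {X₂ : Type} [MetricSpace X₂] [CompleteSpace X₂] [TopologicalSpace.SeparableSpace X₂]
    [MeasurableSpace X₂] [BorelSpace X₂]
    (μ₁ : Measure (X₁ × I)) [IsProbabilityMeasure μ₁]
    (μ₂ : Measure (X₂ × I)) [IsProbabilityMeasure μ₂] :
    mGPDist μ₁ μ₂ =
      sInf {d : ℝ | ∃ _ : MetricSpace (X₁ ⊕ X₂),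
        (∀ x y : X₁, dist (Sum.inl x : X₁ ⊕ X₂) (Sum.inl y : X₁ ⊕ X₂) = dist x y) ∧
        (∀ x y : X₂, dist (Sum.inr x : X₁ ⊕ X₂) (Sum.inr y : X₁ ⊕ X₂) = dist x y) ∧
        d = prohorovDistSum (μ₁.map (Prod.map (Sum.inl : X₁ → X₁ ⊕ X₂) (id : I → I)))
              (μ₂.map (Prod.map (Sum.inr : X₂ → X₁ ⊕ X₂) (id : I → I)))} := by
  apply le_antisymm
  · refine le_csInf ⟨_, Metric.metricSpaceSum, fun _ _ => rfl, fun _ _ => rfl, rfl⟩ ?_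
    rintro _ ⟨_, h₁, h₂, rfl⟩
    exact mGPDist_le_of_sum_metric μ₁ μ₂ (.of_dist_eq h₁) (.of_dist_eq h₂)
  refine le_mGPDist_of_forall_le μ₁ μ₂ fun Z _ _ _ _ φ₁ φ₂ hφ₁ hφ₂ => ?_
  refine le_of_forall_pos_le_add fun ε hε => ?_
  obtain ⟨_, h₁, h₂, hψ⟩ := exists_sum_metric_le_dist_sumElim_add hφ₁ hφ₂ hε
  have hψm : Measurable (Sum.elim φ₁ φ₂) :=
    hφ₁.continuous.measurable.sumElim hφ₂.continuous.measurable
  refine le_trans (b := prohorovDistSum (μ₁.map (Prod.map Sum.inl id))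
    (μ₂.map (Prod.map Sum.inr id))) (csInf_le ⟨0, ?_⟩ ⟨_, h₁, h₂, rfl⟩) ?_
  · rintro _ ⟨_, -, -, rfl⟩
    exact prohorovDistSum_nonneg _ _
  calc _ ≤ prohorovDistSum ((μ₁.map (Prod.map Sum.inl id)).map (Prod.map (Sum.elim φ₁ φ₂) id))
          ((μ₂.map (Prod.map Sum.inr id)).map (Prod.map (Sum.elim φ₁ φ₂) id)) + ε :=
        prohorovDistSum_le_map_add hψm hε.le hψ _ _
    _ = prohorovDistSum (μ₁.map (Prod.map φ₁ id)) (μ₂.map (Prod.map φ₂ id)) + ε := by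
        rw [Measure.map_map (hψm.prodMap measurable_id) (measurable_inl.prodMap measurable_id),
          Measure.map_map (hψm.prodMap measurable_id) (measurable_inr.prodMap measurable_id)]
        rfl

/-- Remark 3.2: the marked Gromov-Prohorov distance equals the infimum
over all metrics on the disjoint union `X₁ ⊔ X₂` extending the given metrics of the
Prohorov distance of the pushforwards under the canonical embeddings. -/
theorem mGPDist_eq_inf_disjoint_union
    {I : Type} [MetricSpace I] [CompleteSpace I] [TopologicalSpace.SeparableSpace I]
    [MeasurableSpace I] [BorelSpace I]
    {X₁ : Type} [MetricSpace X₁] [CompleteSpace X₁] [TopologicalSpace.SeparableSpace X₁]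
    [MeasurableSpace X₁] [BorelSpace X₁]
    {X₂ : Type} [MetricSpace X₂] [CompleteSpace X₂] [TopologicalSpace.SeparableSpace X₂]
    [MeasurableSpace X₂] [BorelSpace X₂]
    (μ₁ : Measure (X₁ × I)) [IsProbabilityMeasure μ₁]
    (μ₂ : Measure (X₂ × I)) [IsProbabilityMeasure μ₂] :
    mGPDist μ₁ μ₂ =
      sInf {d : ℝ | ∃ _ : MetricSpace (X₁ ⊕ X₂),
        (∀ x y : X₁, dist (Sum.inl x : X₁ ⊕ X₂) (Sum.inl y : X₁ ⊕ X₂) = dist x y) ∧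
        (∀ x y : X₂, dist (Sum.inr x : X₁ ⊕ X₂) (Sum.inr y : X₁ ⊕ X₂) = dist x y) ∧
        d = prohorovDistSum (μ₁.map (Prod.map (Sum.inl : X₁ → X₁ ⊕ X₂) (id : I → I)))
              (μ₂.map (Prod.map (Sum.inr : X₂ → X₁ ⊕ X₂) (id : I → I)))} :=
  mGPDist_eq_inf_disjoint_union_general μ₁ μ₂
end
end

section
/- There exists a countable family V of bounded continuous real-valued functions on ℝ₊^{(ℕ choose 2)} × I^ℕ, each of the form φ((r_{ij})_{i<j}, (u_k)_k) = ∏_{k=1}^n g_k(u_k) ∏_{1≤k<l≤n} f_{kl}(r_{kl}) for some n ∈ ℕ and bounded continuous g_k on I and f_{kl} on ℝ₊ (in particular each φ depends on only finitely many coordinates), such that for all I-marked metric measure spaces (X, r, μ) and (X_n, r_n, μ_n), n ≥ 1, the marked distance matrix distributions ν^{(X_n,r_n,μ_n)} converge weakly to ν^{(X,r,μ)} if and only if ∫ φ dν^{(X_n,r_n,μ_n)} → ∫ φ dν^{(X,r,μ)} for every φ ∈ V. -/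
/-!
Fix countable dense sets `DR ⊆ ℝ≥0` and `DI ⊆ I`. The truncated distances `min 1 (dist · d)`
to their points embed `ℝ≥0^(ℕ choose 2) × I^ℕ` homeomorphically onto a subspace of a compact
cube `[0,1]^C`, `C` countable. The cube coordinates separate points, so by Stone–Weierstrass
their polynomials are uniformly dense in the continuous functions on the cube, and integration
against a probability measure is 1-Lipschitz in the sup norm; hence convergence of the integrals
of monomials gives weak convergence of the pushforwards to the cube. Open sets of the subspace
are traces of open sets of the cube, so the portmanteau theorem carries the convergence back. A
monomial in cube coordinates, pulled back, is a product of functions of single distance or mark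
coordinates, i.e. of the required product form.
-/

open MeasureTheory Topology Filter NNReal BoundedContinuousFunction

noncomputable section

lemma Submonoid.countable_closure {M : Type*} [Monoid M] {s : Set M} (hs : s.Countable) :
    (Submonoid.closure s : Set M).Countable := by
  have := hs.to_subtype
  rw [Submonoid.closure_eq_mrange, MonoidHom.coe_mrange]
  exact Set.countable_range _

section CompactSpace

variable {Ω : Type*} [TopologicalSpace Ω] [CompactSpace Ω] [MeasurableSpace Ω]
  [OpensMeasurableSpace Ω]

lemma ContinuousMap.lipschitzWith_integral (μ : Measure Ω) [IsProbabilityMeasure μ] :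
    LipschitzWith 1 fun F : C(Ω, ℝ) => ∫ x, F x ∂μ := by
  refine LipschitzWith.of_dist_le_mul fun F G => ?_
  have hF : Integrable F μ := (mkOfCompact F).integrable μ
  have hG : Integrable G μ := (mkOfCompact G).integrable μ
  rw [NNReal.coe_one, one_mul, dist_eq_norm, dist_eq_norm, ← norm_mkOfCompact,
    ← integral_sub hF hG]
  exact (mkOfCompact (F - G)).norm_integral_le_norm μ

lemma ContinuousMap.isClosed_setOf_tendsto_integral {ι : Type*} {l : Filter ι}
    (μs : ι → Measure Ω) [∀ i, IsProbabilityMeasure (μs i)] (μ : Measure Ω)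
    [IsProbabilityMeasure μ] :
    IsClosed {F : C(Ω, ℝ) | Tendsto (fun i => ∫ x, F x ∂μs i) l (𝓝 (∫ x, F x ∂μ))} :=
  (LipschitzWith.uniformEquicontinuous _ 1 fun i =>
    lipschitzWith_integral (μs i)).equicontinuous.isClosed_setOfPred_tendsto
    (lipschitzWith_integral μ).continuous

/-- The functions whose integrals converge form a closed subspace; by Stone–Weierstrass it
therefore contains everything once it contains a point-separating multiplicative family. -/
theorem ProbabilityMeasure.tendsto_of_separatesPoints_of_tendsto_integral {ι : Type*}
    {l : Filter ι} {S : Set C(Ω, ℝ)} (hS : ∀ x y, x ≠ y → ∃ F ∈ S, F x ≠ F y)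
    {μs : ι → ProbabilityMeasure Ω} {μ : ProbabilityMeasure Ω}
    (h : ∀ F ∈ Submonoid.closure S,
      Tendsto (fun i => ∫ x, F x ∂(μs i : Measure Ω)) l (𝓝 (∫ x, F x ∂(μ : Measure Ω)))) :
    Tendsto μs l (𝓝 μ) := by
  set T := {F : C(Ω, ℝ) |
    Tendsto (fun i => ∫ x, F x ∂(μs i : Measure Ω)) l (𝓝 (∫ x, F x ∂(μ : Measure Ω)))}
  have hadd (ν : Measure Ω) [IsProbabilityMeasure ν] (F G : C(Ω, ℝ)) :
      ∫ x, (F + G) x ∂ν = ∫ x, F x ∂ν + ∫ x, G x ∂ν :=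
    integral_add ((mkOfCompact F).integrable ν) ((mkOfCompact G).integrable ν)
  have hspan : (Submodule.span ℝ (Submonoid.closure S : Set C(Ω, ℝ)) : Set C(Ω, ℝ)) ⊆ T := by
    intro F hF
    induction hF using Submodule.span_induction with
    | mem F hF => exact h F hF
    | zero => simpa [T] using tendsto_const_nhds
    | add F G _ _ hF hG =>
      simpa only [T, Set.mem_ofPred_eq, hadd] using hF.add hG
    | smul c F _ hF =>
      simpa only [T, Set.mem_ofPred_eq, ContinuousMap.smul_apply, integral_smul] using
        hF.const_smul c
  have hsep : (Algebra.adjoin ℝ S).SeparatesPoints := fun x y hxy => by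
    obtain ⟨F, hFS, hF⟩ := hS x y hxy
    exact ⟨F, ⟨F, Algebra.subset_adjoin hFS, rfl⟩, hF⟩
  have hdense : (Algebra.adjoin ℝ S).topologicalClosure = ⊤ :=
    ContinuousMap.subalgebra_topologicalClosure_eq_top_of_separatesPoints _ hsep
  refine ProbabilityMeasure.tendsto_iff_forall_integral_tendsto.2 fun f => ?_
  have hf : f.toContinuousMap ∈ (Algebra.adjoin ℝ S).topologicalClosure :=
    hdense ▸ Algebra.mem_top
  rw [← SetLike.mem_coe, Subalgebra.topologicalClosure_coe, ← Subalgebra.coe_toSubmodule,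
    Algebra.adjoin_eq_span] at hf
  exact closure_minimal hspan (ContinuousMap.isClosed_setOf_tendsto_integral _ _) hf

end CompactSpace

theorem ProbabilityMeasure.tendsto_of_tendsto_map_of_isInducing {α β ι : Type*}
    [TopologicalSpace α] [MeasurableSpace α] [OpensMeasurableSpace α]
    [TopologicalSpace β] [MeasurableSpace β] [OpensMeasurableSpace β] [HasOuterApproxClosed β]
    {l : Filter ι} [l.IsCountablyGenerated] {e : α → β} (he : IsInducing e) (hem : Measurable e)
    {μs : ι → ProbabilityMeasure α} {μ : ProbabilityMeasure α}
    (h : Tendsto (fun i => (μs i).map hem.aemeasurable) l (𝓝 (μ.map hem.aemeasurable))) :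
    Tendsto μs l (𝓝 μ) := by
  refine tendsto_of_forall_isOpen_le_liminf' fun G hG => ?_
  obtain ⟨W, hW, rfl⟩ := he.isOpen_iff.1 hG
  simpa only [ProbabilityMeasure.toMeasure_map, Measure.map_apply hem hW.measurableSet] using
    ProbabilityMeasure.le_liminf_measure_open_of_tendsto h hW

section TruncatedDistance

variable {α : Type*} [PseudoMetricSpace α]

lemma min_one_dist_mem_Icc (a b : α) : min 1 (dist a b) ∈ Set.Icc (0 : ℝ) 1 :=
  ⟨le_min zero_le_one dist_nonneg, min_le_left _ _⟩

def truncDist (b : α) : α →ᵇ ℝ :=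
  mkOfBound ⟨fun a => min 1 (dist a b), by fun_prop⟩ 1 fun a a' =>
    Real.dist_le_of_mem_Icc_01 (min_one_dist_mem_Icc a b) (min_one_dist_mem_Icc a' b)

lemma truncDist_apply (b a : α) : truncDist b a = min 1 (dist a b) := rfl

def truncDistEmb (D : Set α) (a : α) : D → Set.Icc (0 : ℝ) 1 :=
  fun d => ⟨truncDist (d : α) a, min_one_dist_mem_Icc a d⟩

lemma continuous_truncDistEmb (D : Set α) : Continuous (truncDistEmb D) :=
  continuous_pi fun d => (truncDist (d : α)).continuous.subtype_mk _

/-- If `dist a d < δ/3` with `δ ≤ 1`, then the truncated distance to `d` determines `a` up to `δ`. -/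
lemma isInducing_truncDistEmb {D : Set α} (hD : Dense D) : IsInducing (truncDistEmb D) := by
  refine isInducing_iff_nhds.2 fun a =>
    le_antisymm ((continuous_truncDistEmb D).tendsto a).le_comap ?_
  refine Metric.nhds_basis_ball.ge_iff.2 fun δ hδ => ?_
  set δ' := min δ 1
  have hδ' : 0 < δ' := lt_min hδ one_pos
  obtain ⟨d, hdD, had⟩ := Metric.mem_closure_iff.1 (hD a) (δ' / 3) (by positivity)
  have hcoord : Continuous fun y : D → Set.Icc (0 : ℝ) 1 => (y ⟨d, hdD⟩ : ℝ) :=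
    continuous_subtype_val.comp (continuous_apply _)
  refine Filter.mem_comap.2 ⟨_, hcoord.continuousAt.preimage_mem_nhds
    (Metric.ball_mem_nhds (truncDist d a) (by positivity : 0 < δ' / 3)), fun a' ha' => ?_⟩
  simp only [Set.mem_preimage, Metric.mem_ball, truncDistEmb, truncDist_apply,
    Real.dist_eq] at ha' ⊢
  have hda : dist a d < 1 := by linarith [min_le_right δ 1]
  rw [min_eq_right hda.le] at ha'
  have hda' : dist a' d < 2 * δ' / 3 := by
    have := (abs_lt.1 ha').2
    rcases min_lt_iff.1 (by linarith : min 1 (dist a' d) < 2 * δ' / 3) with h | h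
    · linarith [min_le_right δ 1]
    · exact h
  calc dist a' a ≤ dist a' d + dist a d := dist_triangle_right _ _ _
    _ < δ := by linarith [min_le_left δ 1]

end TruncatedDistance

section ProductForm

variable {I : Type} [TopologicalSpace I]

abbrev pairsBelow (n : ℕ) : Finset PairIdx :=
  Finset.subtype (fun p : ℕ × ℕ => p.1 < p.2) (Finset.range n ×ˢ Finset.range n)

lemma mem_pairsBelow {n : ℕ} {p : PairIdx} : p ∈ pairsBelow n ↔ p.1.2 < n := by
  simp only [Finset.mem_subtype, Finset.mem_product, Finset.mem_range]
  exact ⟨And.right, fun h => ⟨p.2.trans h, h⟩⟩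

def IsProductForm (n : ℕ) (φ : MDM I → ℝ) : Prop :=
  ∃ (g : ℕ → (I →ᵇ ℝ)) (f : PairIdx → (ℝ≥0 →ᵇ ℝ)), ∀ x : MDM I,
    φ x = (∏ k ∈ Finset.range n, g k (x.2 k)) * ∏ p ∈ pairsBelow n, f p (x.1 p)

namespace IsProductForm

/-- Extending the factors by `1` beyond `n`. -/
lemma mono {n m : ℕ} {φ : MDM I → ℝ} (hφ : IsProductForm n φ) (hnm : n ≤ m) :
    IsProductForm m φ := by
  obtain ⟨g, f, hφ⟩ := hφ
  refine ⟨fun k => if k ∈ Finset.range n then g k else 1,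
    fun p => if p ∈ pairsBelow n then f p else 1, fun x => ?_⟩
  have hrange : Finset.range n ⊆ Finset.range m := Finset.range_subset_range.2 hnm
  have hpairs : pairsBelow n ⊆ pairsBelow m := fun p hp =>
    mem_pairsBelow.2 ((mem_pairsBelow.1 hp).trans_le hnm)
  have hg (k : ℕ) : (if k ∈ Finset.range n then g k else 1) (x.2 k) =
      if k ∈ Finset.range n then g k (x.2 k) else 1 := by split_ifs <;> rfl
  have hf (p : PairIdx) : (if p ∈ pairsBelow n then f p else 1) (x.1 p) =
      if p ∈ pairsBelow n then f p (x.1 p) else 1 := by split_ifs <;> rfl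
  simp only [hg, hf, Finset.prod_ite_mem, Finset.inter_eq_right.2 hrange,
    Finset.inter_eq_right.2 hpairs, hφ x]

lemma mul {n : ℕ} {φ ψ : MDM I → ℝ} (hφ : IsProductForm n φ) (hψ : IsProductForm n ψ) :
    IsProductForm n (φ * ψ) := by
  obtain ⟨g, f, hφ⟩ := hφ
  obtain ⟨g', f', hψ⟩ := hψ
  refine ⟨g * g', f * f', fun x => ?_⟩
  simp only [Pi.mul_apply, BoundedContinuousFunction.coe_mul, Finset.prod_mul_distrib, hφ x, hψ x]
  ring

lemma one : IsProductForm 0 (1 : MDM I → ℝ) :=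
  ⟨1, 1, fun _ => by simp⟩

lemma comp_mark (h : I →ᵇ ℝ) (k : ℕ) : IsProductForm (k + 1) fun x : MDM I => h (x.2 k) := by
  refine ⟨fun j => if j = k then h else 1, 1, fun x => ?_⟩
  rw [Finset.prod_eq_single_of_mem k (Finset.self_mem_range_succ k) fun j _ hjk => by
    simp [hjk]]
  simp

lemma comp_dist (h : ℝ≥0 →ᵇ ℝ) (p : PairIdx) :
    IsProductForm (p.1.2 + 1) fun x : MDM I => h (x.1 p) := by
  refine ⟨1, fun q => if q = p then h else 1, fun x => ?_⟩
  rw [Finset.prod_eq_single_of_mem p (mem_pairsBelow.2 p.1.2.lt_succ_self) fun q _ hqp => by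
    simp [hqp]]
  simp

end IsProductForm

end ProductForm

section MarkedDistanceMatrixCube

variable {I : Type} (DR : Set ℝ≥0) (DI : Set I)

/-- The compact cube into which `MDM I` embeds via truncated distances to the dense sets
`DR ⊆ ℝ≥0` and `DI ⊆ I`, coordinate by coordinate. -/
abbrev MDMCube : Type := (PairIdx → DR → Set.Icc (0 : ℝ) 1) × (ℕ → DI → Set.Icc (0 : ℝ) 1)

def cubeCoords : Set C(MDMCube DR DI, ℝ) :=
  Set.range (fun q : PairIdx × DR => ⟨fun y => y.1 q.1 q.2, by fun_prop⟩) ∪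
    Set.range (fun q : ℕ × DI => ⟨fun y => y.2 q.1 q.2, by fun_prop⟩)

lemma cubeCoords_separatesPoints (y y' : MDMCube DR DI) (hyy' : y ≠ y') :
    ∃ F ∈ cubeCoords DR DI, F y ≠ F y' := by
  by_cases h : y.1 = y'.1
  · obtain ⟨k, hk⟩ := Function.ne_iff.1 fun h' => hyy' (Prod.ext h h')
    obtain ⟨d, hd⟩ := Function.ne_iff.1 hk
    exact ⟨_, Or.inr ⟨(k, d), rfl⟩, Subtype.coe_injective.ne hd⟩
  · obtain ⟨p, hp⟩ := Function.ne_iff.1 h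
    obtain ⟨d, hd⟩ := Function.ne_iff.1 hp
    exact ⟨_, Or.inl ⟨(p, d), rfl⟩, Subtype.coe_injective.ne hd⟩

variable [MetricSpace I]

def cubeEmb : MDM I → MDMCube DR DI :=
  Prod.map (Pi.map fun _ => truncDistEmb DR) (Pi.map fun _ => truncDistEmb DI)

lemma continuous_cubeEmb : Continuous (cubeEmb DR DI) :=
  (Continuous.piMap fun _ => continuous_truncDistEmb DR).prodMap
    (Continuous.piMap fun _ => continuous_truncDistEmb DI)

variable {DR DI} in
lemma isInducing_cubeEmb (hDR : Dense DR) (hDI : Dense DI) : IsInducing (cubeEmb DR DI) :=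
  (IsInducing.piMap fun _ => isInducing_truncDistEmb hDR).prodMap
    (IsInducing.piMap fun _ => isInducing_truncDistEmb hDI)

def productFamily : Set (MDM I →ᵇ ℝ) :=
  (fun F => (mkOfCompact F).compContinuous ⟨cubeEmb DR DI, continuous_cubeEmb DR DI⟩) ''
    Submonoid.closure (cubeCoords DR DI)

lemma countable_productFamily [Countable DR] [Countable DI] :
    (productFamily DR DI).Countable :=
  (Submonoid.countable_closure ((Set.countable_range _).union (Set.countable_range _))).image _

variable {DR DI}

lemma exists_isProductForm_of_mem_productFamily {φ : MDM I →ᵇ ℝ}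
    (hφ : φ ∈ productFamily DR DI) : ∃ n, IsProductForm n φ := by
  obtain ⟨F, hF, rfl⟩ := hφ
  change ∃ n, IsProductForm n (F ∘ cubeEmb DR DI)
  induction hF using Submonoid.closure_induction with
  | mem F hF =>
    rcases hF with ⟨⟨p, d⟩, rfl⟩ | ⟨⟨k, d⟩, rfl⟩
    · exact ⟨_, IsProductForm.comp_dist (truncDist (d : ℝ≥0)) p⟩
    · exact ⟨_, IsProductForm.comp_mark (truncDist (d : I)) k⟩
  | one => exact ⟨0, IsProductForm.one⟩
  | mul F G _ _ hF hG =>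
    obtain ⟨n, hn⟩ := hF
    obtain ⟨m, hm⟩ := hG
    exact ⟨max n m, (hn.mono (le_max_left n m)).mul (hm.mono (le_max_right n m))⟩

theorem weakConvSeq_of_forall_tendsto_integral_productFamily [MeasurableSpace I]
    [OpensMeasurableSpace I] [SecondCountableTopology I] [Countable DR] [Countable DI]
    (hDR : Dense DR) (hDI : Dense DI) {μs : ℕ → Measure (MDM I)}
    [∀ n, IsProbabilityMeasure (μs n)] {μ : Measure (MDM I)} [IsProbabilityMeasure μ]
    (h : ∀ φ ∈ productFamily DR DI,
      Tendsto (fun n => ∫ x, φ x ∂μs n) atTop (𝓝 (∫ x, φ x ∂μ))) :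
    WeakConvSeq μs μ := by
  let : MeasurableSpace (MDMCube DR DI) := borel _
  have : BorelSpace (MDMCube DR DI) := ⟨rfl⟩
  have hem : Measurable (cubeEmb DR DI) := (continuous_cubeEmb DR DI).measurable
  let P (n : ℕ) : ProbabilityMeasure (MDM I) := ⟨μs n, inferInstance⟩
  let P₀ : ProbabilityMeasure (MDM I) := ⟨μ, inferInstance⟩
  have hconv : Tendsto P atTop (𝓝 P₀) := by
    refine ProbabilityMeasure.tendsto_of_tendsto_map_of_isInducing (isInducing_cubeEmb hDR hDI)
      hem <| ProbabilityMeasure.tendsto_of_separatesPoints_of_tendsto_integral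
        (cubeCoords_separatesPoints DR DI) fun F hF => ?_
    simp only [ProbabilityMeasure.toMeasure_map,
      integral_map hem.aemeasurable F.continuous.aestronglyMeasurable]
    exact h _ ⟨F, hF, rfl⟩
  exact ProbabilityMeasure.tendsto_iff_forall_integral_tendsto.1 hconv

end MarkedDistanceMatrixCube

lemma measurable_distMatMap (X I : Type) [PseudoMetricSpace X] [MeasurableSpace X]
    [SecondCountableTopology X] [OpensMeasurableSpace X] [MeasurableSpace I] :
    Measurable (distMatMap X I) :=
  (measurable_pi_lambda _ fun p =>
    ((measurable_pi_apply p.1.1).fst).nndist (measurable_pi_apply p.1.2).fst).prodMk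
    (measurable_pi_lambda _ fun k => (measurable_pi_apply k).snd)

instance isProbabilityMeasure_mDMD {X I : Type} [PseudoMetricSpace X] [MeasurableSpace X]
    [SecondCountableTopology X] [OpensMeasurableSpace X] [MeasurableSpace I]
    (μinf : Measure (ℕ → X × I)) [IsProbabilityMeasure μinf] :
    IsProbabilityMeasure (mDMD (I := I) μinf) :=
  Measure.isProbabilityMeasure_map (measurable_distMatMap X I).aemeasurable

theorem exists_countable_convergence_determining_family_general
    {I : Type} [MetricSpace I] [TopologicalSpace.SeparableSpace I]
    [MeasurableSpace I] [BorelSpace I] :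
    ∃ V : Set (MDM I →ᵇ ℝ), V.Countable ∧
      (∀ φ ∈ V, ∃ (n : ℕ) (g : ℕ → (I →ᵇ ℝ)) (f : PairIdx → (ℝ≥0 →ᵇ ℝ)),
        ∀ x : MDM I,
          φ x = (∏ k ∈ Finset.range n, g k (x.2 k)) *
            ∏ p ∈ Finset.subtype (fun p : ℕ × ℕ => p.1 < p.2)
                (Finset.range n ×ˢ Finset.range n), f p (x.1 p)) ∧
      (∀ (X : Type) (_ : MetricSpace X) (_ : MeasurableSpace X),
        BorelSpace X → CompleteSpace X → TopologicalSpace.SeparableSpace X →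
        ∀ μ : Measure (X × I), IsProbabilityMeasure μ →
        ∀ μinf : Measure (ℕ → X × I), IsProductMeasure μ μinf →
        ∀ (Xn : ℕ → Type) (_ : ∀ n, MetricSpace (Xn n)) (_ : ∀ n, MeasurableSpace (Xn n)),
          (∀ n, BorelSpace (Xn n)) → (∀ n, CompleteSpace (Xn n)) →
          (∀ n, TopologicalSpace.SeparableSpace (Xn n)) →
        ∀ μn : (n : ℕ) → Measure (Xn n × I), (∀ n, IsProbabilityMeasure (μn n)) →
        ∀ μninf : (n : ℕ) → Measure (ℕ → Xn n × I),
          (∀ n, IsProductMeasure (μn n) (μninf n)) →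
        (WeakConvSeq (fun n => mDMD (I := I) (μninf n)) (mDMD (I := I) μinf) ↔
          ∀ φ ∈ V, Tendsto (fun n => ∫ x, φ x ∂(mDMD (I := I) (μninf n))) atTop
            (𝓝 (∫ x, φ x ∂(mDMD (I := I) μinf))))) := by
  have := UniformSpace.secondCountable_of_separable I
  obtain ⟨DR, hDRc, hDR⟩ := TopologicalSpace.exists_countable_dense ℝ≥0
  obtain ⟨DI, hDIc, hDI⟩ := TopologicalSpace.exists_countable_dense I
  have := hDRc.to_subtype
  have := hDIc.to_subtype
  refine ⟨productFamily DR DI, countable_productFamily DR DI,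
    fun φ hφ => exists_isProductForm_of_mem_productFamily hφ, ?_⟩
  intro X _ _ _ _ _ μ _ μinf hμinf Xn _ _ _ _ _ μn _ μninf hμninf
  have := UniformSpace.secondCountable_of_separable X
  have (n : ℕ) := UniformSpace.secondCountable_of_separable (Xn n)
  have := hμinf.1
  have (n : ℕ) := (hμninf n).1
  exact ⟨fun h φ _ => h φ, weakConvSeq_of_forall_tendsto_integral_productFamily hDR hDI⟩

/-- cf. Proposition 4.2: there is a countable family `V` of bounded
continuous functions of product form
`φ(r̲̲, u̲) = ∏_{k<n} g_k(u_k) · ∏_{k<l<n} f_{kl}(r_{kl})`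
which is convergence determining for marked distance matrix distributions: weak
convergence `ν^{xₙ} ⇒ ν^x` holds iff `∫ φ dν^{xₙ} → ∫ φ dν^x` for all `φ ∈ V`. -/
theorem exists_countable_convergence_determining_family
    {I : Type} [MetricSpace I] [CompleteSpace I] [TopologicalSpace.SeparableSpace I]
    [MeasurableSpace I] [BorelSpace I] :
    ∃ V : Set (MDM I →ᵇ ℝ), V.Countable ∧
      (∀ φ ∈ V, ∃ (n : ℕ) (g : ℕ → (I →ᵇ ℝ)) (f : PairIdx → (ℝ≥0 →ᵇ ℝ)),
        ∀ x : MDM I,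
          φ x = (∏ k ∈ Finset.range n, g k (x.2 k)) *
            ∏ p ∈ Finset.subtype (fun p : ℕ × ℕ => p.1 < p.2)
                (Finset.range n ×ˢ Finset.range n), f p (x.1 p)) ∧
      (∀ (X : Type) (_ : MetricSpace X) (_ : MeasurableSpace X),
        BorelSpace X → CompleteSpace X → TopologicalSpace.SeparableSpace X →
        ∀ μ : Measure (X × I), IsProbabilityMeasure μ →
        ∀ μinf : Measure (ℕ → X × I), IsProductMeasure μ μinf →
        ∀ (Xn : ℕ → Type) (_ : ∀ n, MetricSpace (Xn n)) (_ : ∀ n, MeasurableSpace (Xn n)),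
          (∀ n, BorelSpace (Xn n)) → (∀ n, CompleteSpace (Xn n)) →
          (∀ n, TopologicalSpace.SeparableSpace (Xn n)) →
        ∀ μn : (n : ℕ) → Measure (Xn n × I), (∀ n, IsProbabilityMeasure (μn n)) →
        ∀ μninf : (n : ℕ) → Measure (ℕ → Xn n × I),
          (∀ n, IsProductMeasure (μn n) (μninf n)) →
        (WeakConvSeq (fun n => mDMD (I := I) (μninf n)) (mDMD (I := I) μinf) ↔
          ∀ φ ∈ V, Tendsto (fun n => ∫ x, φ x ∂(mDMD (I := I) (μninf n))) atTop
            (𝓝 (∫ x, φ x ∂(mDMD (I := I) μinf))))) :=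
  exists_countable_convergence_determining_family_general
end
end
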